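/- arXiv:2401.05981 — 5 statements merged into one kernel-verified Lean document; each statement's English description precedes it below -/
import Mathlib

section
/- Let (a,r,s):ℝ→ℝ³ be a solution of the ODE system a'=r, r'=-v r - s a/2 + a|r|/2, s'=-v s - r a. If r(ξ)>0 on an interval, then on that interval d/dξ (2r - s) = (-v + a)(2r - s). -/
theorem stmt1_general (v : ℝ) (a r s : ℝ → ℝ) (I : Set ℝ)
    (hr : ∀ ξ, HasDerivAt r (-v * r ξ - s ξ * a ξ / 2 + a ξ * |r ξ| / 2) ξ)
    (hs : ∀ ξ, HasDerivAt s (-v * s ξ - r ξ * a ξ) ξ)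
    (hI : ∀ ξ ∈ I, 0 < r ξ) :
    ∀ ξ ∈ I, HasDerivAt (fun ξ => 2 * r ξ - s ξ) ((-v + a ξ) * (2 * r ξ - s ξ)) ξ := by
  intro ξ hξ
  refine (((hr ξ).const_mul 2).sub (hs ξ)).congr_deriv ?_
  rw [abs_of_pos (hI ξ hξ)]
  ring

/-- Along solutions of the TFE traveling-wave system, wherever r>0 one has
d/dξ (2r - s) = (-v + a)(2r - s). -/
theorem stmt1 (v : ℝ) (a r s : ℝ → ℝ) (I : Set ℝ)
    (ha : ∀ ξ, HasDerivAt a (r ξ) ξ)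
    (hr : ∀ ξ, HasDerivAt r (-v * r ξ - s ξ * a ξ / 2 + a ξ * |r ξ| / 2) ξ)
    (hs : ∀ ξ, HasDerivAt s (-v * s ξ - r ξ * a ξ) ξ)
    (hI : ∀ ξ ∈ I, 0 < r ξ) :
    ∀ ξ ∈ I, HasDerivAt (fun ξ => 2 * r ξ - s ξ) ((-v + a ξ) * (2 * r ξ - s ξ)) ξ :=
  stmt1_general v a r s I hr hs hI
end

section
/- Let v∈ℝ and let (a,r,s):ℝ→ℝ³ be a solution of a'=r, r'=-v r - s a/2 + a|r|/2, s'=-v s - r a with (r(ξ)² + s(ξ)²) → 0 as ξ → -∞ and a(ξ) → a₀ as ξ → -∞. If the solution is not identically equal to the constant (a₀,0,0), then |a₀| ≥ (4/5)v. -/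
open Filter Set

/-- If a nonconstant solution of the TFE traveling-wave system satisfies
(r,s) → (0,0) and a → a₀ as ξ → -∞, then |a₀| ≥ (4/5)v. -/
theorem stmt4 (v a₀ : ℝ) (a r s : ℝ → ℝ)
    (ha : ∀ ξ, HasDerivAt a (r ξ) ξ)
    (hr : ∀ ξ, HasDerivAt r (-v * r ξ - s ξ * a ξ / 2 + a ξ * |r ξ| / 2) ξ)
    (hs : ∀ ξ, HasDerivAt s (-v * s ξ - r ξ * a ξ) ξ)
    (hlim : Tendsto (fun ξ => r ξ ^ 2 + s ξ ^ 2) atBot (nhds 0))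
    (hlima : Tendsto a atBot (nhds a₀))
    (hnc : ¬ (∀ ξ, a ξ = a₀ ∧ r ξ = 0 ∧ s ξ = 0)) :
    |a₀| ≥ (4 / 5) * v := by
  by_contra hcon
  push_neg at hcon
  have hv : 0 < v := by nlinarith [abs_nonneg a₀]
  set E : ℝ → ℝ := fun ξ => r ξ ^ 2 + s ξ ^ 2 with hEdef
  set E' : ℝ → ℝ := fun ξ =>
      2 * r ξ ^ 1 * (-v * r ξ - s ξ * a ξ / 2 + a ξ * |r ξ| / 2)
        + 2 * s ξ ^ 1 * (-v * s ξ - r ξ * a ξ) with hE'def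
  have hE : ∀ ξ, HasDerivAt E (E' ξ) ξ := by
    intro ξ
    exact ((hr ξ).pow 2).add ((hs ξ).pow 2)
  have hEnn : ∀ ξ, 0 ≤ E ξ := fun ξ => by positivity
  -- key differential inequality facts
  have hfacts : ∀ ξ, a ξ * r ξ * |r ξ| ≤ |a ξ| * r ξ ^ 2 ∧
      -(a ξ * r ξ * |r ξ|) ≤ |a ξ| * r ξ ^ 2 ∧
      -(3 * (r ξ * s ξ * a ξ)) ≤ 3 * (|a ξ| * (|r ξ| * |s ξ|)) ∧
      3 * (r ξ * s ξ * a ξ) ≤ 3 * (|a ξ| * (|r ξ| * |s ξ|)) ∧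
      2 * (|r ξ| * |s ξ|) ≤ r ξ ^ 2 + s ξ ^ 2 := by
    intro ξ
    have habs1 : abs (a ξ * r ξ * |r ξ|) = |a ξ| * r ξ ^ 2 := by
      rw [abs_mul, abs_mul, abs_abs, ← sq_abs (r ξ)]; ring
    have habs2 : |r ξ * s ξ * a ξ| = |a ξ| * (|r ξ| * |s ξ|) := by
      rw [abs_mul, abs_mul]; ring
    refine ⟨?_, ?_, ?_, ?_, ?_⟩
    · calc a ξ * r ξ * |r ξ| ≤ abs (a ξ * r ξ * |r ξ|) := le_abs_self _
        _ = _ := habs1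
    · calc -(a ξ * r ξ * |r ξ|) ≤ abs (a ξ * r ξ * |r ξ|) := neg_le_abs _
        _ = _ := habs1
    · have h := neg_abs_le (r ξ * s ξ * a ξ)
      rw [habs2] at h; linarith
    · have h := le_abs_self (r ξ * s ξ * a ξ)
      rw [habs2] at h; linarith
    · nlinarith [sq_nonneg (|r ξ| - |s ξ|), sq_abs (r ξ), sq_abs (s ξ)]
  have hbound : ∀ ξ, E' ξ ≤ (-2 * v + 5 / 2 * |a ξ|) * E ξ := by
    intro ξ
    obtain ⟨h1, h2, h3, h4, h5⟩ := hfacts ξ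
    have hAnn := abs_nonneg (a ξ)
    simp only [hE'def, hEdef, pow_one]
    nlinarith [mul_le_mul_of_nonneg_left h5 hAnn]
  have hbound2 : ∀ ξ, -((2 * |v| + 5 / 2 * |a ξ|) * E ξ) ≤ E' ξ := by
    intro ξ
    obtain ⟨h1, h2, h3, h4, h5⟩ := hfacts ξ
    have hAnn := abs_nonneg (a ξ)
    have hvv : v ≤ |v| := le_abs_self v
    simp only [hE'def, hEdef, pow_one]
    nlinarith [mul_le_mul_of_nonneg_left h5 hAnn, hEnn ξ]
  -- continuity
  have hacont : Continuous a := continuous_iff_continuousAt.mpr fun ξ => (ha ξ).continuousAt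
  have hEcont : Continuous E := continuous_iff_continuousAt.mpr fun ξ => (hE ξ).continuousAt
  -- choose ξ₀ such that |a ξ| < 4/5 v for ξ ≤ ξ₀
  have hev : ∀ᶠ ξ in atBot, |a ξ - a₀| < 4 / 5 * v - |a₀| := by
    have := Metric.tendsto_nhds.mp hlima (4 / 5 * v - |a₀|) (by linarith)
    simpa [Real.dist_eq] using this
  obtain ⟨ξ₀, hξ₀⟩ := eventually_atBot.mp hev
  have hacoef : ∀ ξ ≤ ξ₀, -2 * v + 5 / 2 * |a ξ| ≤ 0 := by
    intro ξ hξ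
    have h := hξ₀ ξ hξ
    have : |a ξ| ≤ |a ξ - a₀| + |a₀| := by
      calc |a ξ| = |a ξ - a₀ + a₀| := by ring_nf
        _ ≤ |a ξ - a₀| + |a₀| := abs_add_le _ _
    linarith
  -- E antitone on Iic ξ₀
  have hant : AntitoneOn E (Iic ξ₀) := by
    apply antitoneOn_of_deriv_nonpos (convex_Iic ξ₀) hEcont.continuousOn
    · exact fun x _ => (hE x).differentiableAt.differentiableWithinAt
    · intro x hx
      rw [interior_Iic] at hx
      rw [(hE x).deriv]
      have h2 := hacoef x (le_of_lt hx)
      obtain ⟨f1, f2, f3, f4, f5⟩ := hfacts x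
      have hAnn := abs_nonneg (a x)
      show 2 * r x ^ 1 * (-v * r x - s x * a x / 2 + a x * |r x| / 2)
          + 2 * s x ^ 1 * (-v * s x - r x * a x) ≤ 0
      nlinarith [mul_le_mul_of_nonneg_left f5 hAnn,
        mul_le_mul_of_nonneg_right h2 (add_nonneg (sq_nonneg (r x)) (sq_nonneg (s x)))]
  have hE0 : ∀ ξ ≤ ξ₀, E ξ = 0 := by
    intro ξ hξ
    have hle : E ξ ≤ 0 := by
      refine ge_of_tendsto hlim ?_
      refine eventually_atBot.mpr ⟨ξ, fun ξ' hξ' => ?_⟩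
      exact hant (le_trans hξ' hξ) hξ hξ'
    linarith [hEnn ξ]
  -- propagate forward with Grönwall
  have hEzero : ∀ ξ, E ξ = 0 := by
    intro ξ
    rcases le_or_gt ξ ξ₀ with h | h
    · exact hE0 ξ h
    · obtain ⟨C, hC⟩ := (isCompact_Icc (a := ξ₀) (b := ξ)).exists_bound_of_continuousOn
        hacont.continuousOn
      have key := norm_le_gronwallBound_of_norm_deriv_right_le
        (f := E) (f' := E') (δ := 0) (K := 2 * |v| + 5 / 2 * C) (ε := 0)
        (a := ξ₀) (b := ξ) hEcont.continuousOn
        (fun x _ => (hE x).hasDerivWithinAt)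
        (by simp [hE0 ξ₀ le_rfl])
        ?_ ξ ⟨le_of_lt h, le_rfl⟩
      · rw [gronwallBound_ε0_δ0] at key
        have := hEnn ξ
        have : |E ξ| ≤ 0 := by simpa using key
        have := abs_nonneg (E ξ)
        have : |E ξ| = 0 := le_antisymm ‹|E ξ| ≤ 0› ‹0 ≤ |E ξ|›
        exact abs_eq_zero.mp this
      · intro x hx
        have hCx : |a x| ≤ C := by simpa using hC x ⟨hx.1, le_of_lt hx.2⟩
        have hup : E' x ≤ (2 * |v| + 5 / 2 * C) * E x := by
          have h1 := hbound x
          have h2 : -2 * v ≤ 2 * |v| := by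
            have := neg_abs_le v; linarith
          nlinarith [hEnn x, abs_nonneg (a x)]
        have hlo : -((2 * |v| + 5 / 2 * C) * E x) ≤ E' x := by
          have h1 := hbound2 x
          nlinarith [hEnn x, abs_nonneg (a x)]
        rw [Real.norm_eq_abs, Real.norm_eq_abs, abs_of_nonneg (hEnn x), add_zero]
        exact abs_le.mpr ⟨by linarith, hup⟩
  have hrz : ∀ ξ, r ξ = 0 := by
    intro ξ
    have h : r ξ ^ 2 + s ξ ^ 2 = 0 := hEzero ξ
    have h1 : r ξ ^ 2 = 0 := by nlinarith [sq_nonneg (r ξ), sq_nonneg (s ξ)]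
    exact pow_eq_zero_iff two_ne_zero |>.mp h1
  have hsz : ∀ ξ, s ξ = 0 := by
    intro ξ
    have h : r ξ ^ 2 + s ξ ^ 2 = 0 := hEzero ξ
    have h1 : s ξ ^ 2 = 0 := by nlinarith [sq_nonneg (r ξ), sq_nonneg (s ξ)]
    exact pow_eq_zero_iff two_ne_zero |>.mp h1
  have haconst : ∀ ξ, a ξ = a 0 := by
    have hda : ∀ ξ, HasDerivAt a 0 ξ := fun ξ => hrz ξ ▸ ha ξ
    intro ξ
    exact is_const_of_deriv_eq_zero (fun x => (hda x).differentiableAt)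
      (fun x => (hda x).deriv) ξ 0
  have ha0 : a 0 = a₀ := by
    have h1 : Tendsto a atBot (nhds (a 0)) := by
      have : a = fun _ => a 0 := funext haconst
      rw [this]; exact tendsto_const_nhds
    exact tendsto_nhds_unique h1 hlima
  exact hnc fun ξ => ⟨(haconst ξ).trans ha0, hrz ξ, hsz ξ⟩
end

section
/- Consider the planar ODE system a' = r, r' = r(-v - a/2) (dynamics inside the invariant half-plane I₁={r>0, s=2r} of the two-tubes TFE traveling wave system). Along any solution, the quantity r + (v + a/2)² is constant. -/
/-- Inside the invariant half-plane I₁, the planar system a' = r, r' = r(-v - a/2)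
has the conserved quantity r + (v + a/2)². -/
theorem stmt7 (v : ℝ) (a r : ℝ → ℝ)
    (ha : ∀ ξ, HasDerivAt a (r ξ) ξ)
    (hr : ∀ ξ, HasDerivAt r (r ξ * (-v - a ξ / 2)) ξ) :
    ∀ ξ₁ ξ₂, r ξ₁ + (v + a ξ₁ / 2) ^ 2 = r ξ₂ + (v + a ξ₂ / 2) ^ 2 := by
  have key : ∀ ξ, HasDerivAt (fun ξ => r ξ + (v + a ξ / 2) ^ 2) 0 ξ := by
    intro ξ
    have h : HasDerivAt (fun ξ => r ξ + (v + a ξ / 2) ^ 2)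
        (r ξ * (-v - a ξ / 2) + (2:ℕ) * (v + a ξ / 2) ^ (2 - 1) * (r ξ / 2)) ξ := by
      exact (hr ξ).add ((((ha ξ).div_const 2).const_add v).pow 2)
    convert h using 1
    ring
  have hc : ∀ ξ₁ ξ₂, (fun ξ => r ξ + (v + a ξ / 2) ^ 2) ξ₁ =
      (fun ξ => r ξ + (v + a ξ / 2) ^ 2) ξ₂ := by
    intro ξ₁ ξ₂
    have := is_const_of_deriv_eq_zero (f := fun ξ => r ξ + (v + a ξ / 2) ^ 2)
      (fun ξ => (key ξ).differentiableAt) (fun ξ => (key ξ).deriv) ξ₁ ξ₂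
    exact this
  exact hc
end

section
/- The planar system a' = r, r' = a³/4 + a|r|/2 admits no nonconstant homoclinic trajectory to the origin, i.e., no nonconstant solution (a,r):ℝ→ℝ² with (a,r)(ξ) → (0,0) as ξ → ±∞. -/
/-!
Along the flow, `W = a r` satisfies `W' = r² + a⁴/4 + a²|r|/2 ≥ 0`, so `W` is nondecreasing.
A homoclinic orbit has `W → 0` at both ends, hence `W ≡ 0` and so `W' ≡ 0`; but `W'` vanishes
only at the origin.
-/

open Filter Topology

theorem Monotone.eq_of_tendsto_atTop_atBot {α β : Type*} [TopologicalSpace α] [PartialOrder α]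
    [OrderClosedTopology α] [Preorder β] [IsDirectedOrder β] [IsCodirectedOrder β]
    {f : β → α} {c : α} (hf : Monotone f) (htop : Tendsto f atTop (𝓝 c))
    (hbot : Tendsto f atBot (𝓝 c)) (x : β) : f x = c :=
  le_antisymm (hf.ge_of_tendsto htop x) (hf.le_of_tendsto hbot x)

theorem eq_zero_of_hasDerivAt_nonneg_of_tendsto {f f' : ℝ → ℝ} {c : ℝ}
    (hf : ∀ x, HasDerivAt f (f' x) x) (hf' : ∀ x, 0 ≤ f' x)
    (htop : Tendsto f atTop (𝓝 c)) (hbot : Tendsto f atBot (𝓝 c)) (x : ℝ) : f' x = 0 := by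
  have hconst : f = fun _ => c :=
    funext ((monotone_of_hasDerivAt_nonneg hf hf').eq_of_tendsto_atTop_atBot htop hbot)
  exact (hf x).unique (hconst ▸ hasDerivAt_const x c)

theorem tfe_flux_eq (a r : ℝ) :
    r * r + a * (a ^ 3 / 4 + a * |r| / 2) = r ^ 2 + (a ^ 2) ^ 2 / 4 + a ^ 2 * |r| / 2 := by
  ring

theorem tfe_flux_nonneg (a r : ℝ) : 0 ≤ r * r + a * (a ^ 3 / 4 + a * |r| / 2) := by
  rw [tfe_flux_eq]
  positivity

theorem tfe_flux_eq_zero_iff (a r : ℝ) :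
    r * r + a * (a ^ 3 / 4 + a * |r| / 2) = 0 ↔ a = 0 ∧ r = 0 := by
  refine ⟨fun h => ?_, fun ⟨ha, hr⟩ => by simp [ha, hr]⟩
  rw [tfe_flux_eq] at h
  have hr2 : 0 ≤ r ^ 2 := sq_nonneg r
  have ha4 : 0 ≤ (a ^ 2) ^ 2 := sq_nonneg _
  have har : 0 ≤ a ^ 2 * |r| := by positivity
  exact ⟨pow_eq_zero_iff two_ne_zero |>.1 (pow_eq_zero_iff two_ne_zero |>.1 (by linarith)),
    pow_eq_zero_iff two_ne_zero |>.1 (by linarith)⟩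

theorem Filter.Tendsto.fst_mul_snd_nhds_zero {X : Type*} {l : Filter X} {f g : X → ℝ}
    (h : Tendsto (fun x => (f x, g x)) l (𝓝 (0, 0))) : Tendsto (fun x => f x * g x) l (𝓝 0) := by
  simpa using h.fst_nhds.mul h.snd_nhds

/-- The planar system a' = r, r' = a³/4 + a|r|/2 has no nonconstant homoclinic
trajectory to the origin: any solution with (a,r) → (0,0) as ξ → ±∞ is
identically zero. -/
theorem stmt11 (a r : ℝ → ℝ)
    (ha : ∀ ξ, HasDerivAt a (r ξ) ξ)
    (hr : ∀ ξ, HasDerivAt r (a ξ ^ 3 / 4 + a ξ * |r ξ| / 2) ξ)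
    (htop : Tendsto (fun ξ => (a ξ, r ξ)) atTop (nhds (0, 0)))
    (hbot : Tendsto (fun ξ => (a ξ, r ξ)) atBot (nhds (0, 0))) :
    ∀ ξ, a ξ = 0 ∧ r ξ = 0 := by
  intro ξ
  have hW : ∀ ξ, HasDerivAt (fun ξ => a ξ * r ξ)
      (r ξ * r ξ + a ξ * (a ξ ^ 3 / 4 + a ξ * |r ξ| / 2)) ξ :=
    fun ξ => (ha ξ).mul (hr ξ)
  exact (tfe_flux_eq_zero_iff _ _).1 <| eq_zero_of_hasDerivAt_nonneg_of_tendsto hW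
    (fun ξ => tfe_flux_nonneg _ _) htop.fst_mul_snd_nhds_zero hbot.fst_mul_snd_nhds_zero ξ
end

section
/- Let l>0 and let q₁:ℝ→ℝ be a twice differentiable function with q₁(ξ)→0 as ξ→±∞, satisfying q₁ = -(1/2) l r₁ - (1/4) l² a q₁' + (1/2) l² q₁'' for functions a, r₁:ℝ→ℝ with r₁(ξ) ≤ 0 for all ξ. If q₁ attains a global minimum at some ξ₂∈ℝ, then q₁(ξ₂) ≥ 0; consequently q₁(ξ) ≥ 0 for all ξ∈ℝ. -/
open Filter

/-- Maximum-principle consistency argument: if q₁ decays at ±∞, satisfies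
q₁ = -(1/2) l r₁ - (1/4) l² a q₁' + (1/2) l² q₁'' with r₁ ≤ 0 and l > 0, then q₁
is nonnegative at any global minimum, and consequently q₁ ≥ 0 everywhere. -/
theorem stmt18 (l : ℝ) (hl : 0 < l) (q q' q'' a r₁ : ℝ → ℝ)
    (hq : ∀ ξ, HasDerivAt q (q' ξ) ξ)
    (hq' : ∀ ξ, HasDerivAt q' (q'' ξ) ξ)
    (htop : Tendsto q atTop (nhds 0))
    (hbot : Tendsto q atBot (nhds 0))
    (heq : ∀ ξ, q ξ = -(1/2) * l * r₁ ξ - (1/4) * l ^ 2 * a ξ * q' ξ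
      + (1/2) * l ^ 2 * q'' ξ)
    (hr₁ : ∀ ξ, r₁ ξ ≤ 0) :
    (∀ ξ₂, (∀ ξ, q ξ₂ ≤ q ξ) → 0 ≤ q ξ₂) ∧ (∀ ξ, 0 ≤ q ξ) := by
  have hcont : Continuous q := by
    rw [continuous_iff_continuousAt]
    exact fun x => (hq x).continuousAt
  have hpart1 : ∀ ξ₂, (∀ ξ, q ξ₂ ≤ q ξ) → 0 ≤ q ξ₂ := by
    intro ξ₂ hmin
    have hloc : IsLocalMin q ξ₂ := Filter.Eventually.of_forall hmin
    have hq'0 : q' ξ₂ = 0 := hloc.hasDerivAt_eq_zero (hq ξ₂)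
    -- second derivative nonnegative at the min
    have hq''0 : 0 ≤ q'' ξ₂ := by
      by_contra hneg
      push_neg at hneg
      -- q' has negative derivative at ξ₂ and q' ξ₂ = 0, so q' < 0 just to the right
      have hslope : Tendsto (fun ξ => (ξ - ξ₂)⁻¹ * (q' ξ - q' ξ₂)) (nhdsWithin ξ₂ {ξ₂}ᶜ)
          (nhds (q'' ξ₂)) := hasDerivAt_iff_tendsto_slope.mp (hq' ξ₂)
      have hslope' : Tendsto (fun ξ => (ξ - ξ₂)⁻¹ * (q' ξ - q' ξ₂))
          (nhdsWithin ξ₂ (Set.Ioi ξ₂)) (nhds (q'' ξ₂)) :=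
        hslope.mono_left (nhdsWithin_mono _ (fun x hx => ne_of_gt hx))
      have hev : ∀ᶠ ξ in nhdsWithin ξ₂ (Set.Ioi ξ₂),
          (ξ - ξ₂)⁻¹ * (q' ξ - q' ξ₂) < 0 :=
        hslope'.eventually (eventually_lt_nhds hneg)
      rw [eventually_nhdsWithin_iff] at hev
      obtain ⟨ε, hε, hball⟩ := Metric.eventually_nhds_iff.mp hev
      set b := ξ₂ + ε / 2 with hb
      have hbgt : ξ₂ < b := by simp [hb]; positivity
      have hq'neg : ∀ x ∈ Set.Ioo ξ₂ b, q' x < 0 := by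
        intro x hx
        have hd : dist x ξ₂ < ε := by
          rw [Real.dist_eq, abs_of_pos (by linarith [hx.1])]
          have := hx.2
          simp only [hb] at this
          linarith
        have := hball hd hx.1
        rw [hq'0, sub_zero] at this
        have hpos : 0 < (x - ξ₂)⁻¹ := inv_pos.mpr (by linarith [hx.1])
        nlinarith
      have hanti : StrictAntiOn q (Set.Icc ξ₂ b) := by
        apply strictAntiOn_of_hasDerivWithinAt_neg (convex_Icc _ _)
          (hcont.continuousOn)
          (fun x _ => (hq x).hasDerivWithinAt)
        intro x hx
        rw [interior_Icc] at hx
        exact hq'neg x hx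
      have := hanti (Set.left_mem_Icc.mpr hbgt.le) (Set.right_mem_Icc.mpr hbgt.le) hbgt
      exact absurd (hmin b) (not_le.mpr this)
    have h := heq ξ₂
    rw [hq'0] at h
    nlinarith [hr₁ ξ₂, sq_nonneg l]
  refine ⟨hpart1, ?_⟩
  intro ξ₀
  by_contra hneg
  push_neg at hneg
  have hIoi : Set.Ioi (q ξ₀) ∈ nhds (0 : ℝ) := Ioi_mem_nhds hneg
  obtain ⟨A, hA⟩ := (htop.eventually (eventually_mem_set.mpr hIoi)).exists_forall_of_atTop
  obtain ⟨B, hB⟩ := (hbot.eventually (eventually_mem_set.mpr hIoi)).exists_forall_of_atBot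
  set lo := min B ξ₀ with hlo
  set hi := max A ξ₀ with hhi
  obtain ⟨ξ₂, hξ₂mem, hξ₂min⟩ := isCompact_Icc.exists_isMinOn
    (⟨ξ₀, min_le_right _ _, le_max_right _ _⟩ : (Set.Icc lo hi).Nonempty)
    hcont.continuousOn
  have h₀mem : ξ₀ ∈ Set.Icc lo hi := ⟨min_le_right _ _, le_max_right _ _⟩
  have h1 : q ξ₂ ≤ q ξ₀ := hξ₂min h₀mem
  have hglobal : ∀ ξ, q ξ₂ ≤ q ξ := by
    intro ξ
    rcases lt_or_ge ξ lo with h | h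
    · have : ξ ≤ B := le_trans h.le (min_le_left _ _)
      exact h1.trans (le_of_lt (hB ξ this))
    · rcases le_or_gt ξ hi with h' | h'
      · exact hξ₂min ⟨h, h'⟩
      · have : A ≤ ξ := le_trans (le_max_left _ _) h'.le
        exact h1.trans (le_of_lt (hA ξ this))
  have h0 : 0 ≤ q ξ₂ := hpart1 ξ₂ hglobal
  linarith
end
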